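/- arXiv:1203.3904 — 3 statements merged into one kernel-verified Lean document; each statement's English description precedes it below -/
import Mathlib

section
/- The position y is a flat output determining the full state: let ρ, ℓ > 0, let v, φ : ℝ → ℝ be continuous with v(t) ≠ 0 for all t, and let g : ℝ → M₃(ℝ) be differentiable with g(t) ∈ SO(3) for all t satisfying ġ(t) = g(t)·( (v(t)/ρ)·X(e₂) + (v(t)/ℓ)·tan φ(t) · X(e₃) ). Then with y(t) := ρ·g(t)e₃, the columns of g are recovered from y and v by g(t)e₁ = ẏ(t)/v(t), g(t)e₂ = (y(t) × ẏ(t))/(ρ·v(t)), and g(t)e₃ = y(t)/ρ. -/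
open Matrix

/-- The skew-symmetric matrix `X(n)` with `X(n) w = n × w`. -/
def skewMat (n : Fin 3 → ℝ) : Matrix (Fin 3) (Fin 3) ℝ :=
  !![0, -n 2, n 1; n 2, 0, -n 0; -n 1, n 0, 0]

/-- Cross product on `ℝ³`. -/
def crossVec (u v : Fin 3 → ℝ) : Fin 3 → ℝ :=
  ![u 1 * v 2 - u 2 * v 1, u 2 * v 0 - u 0 * v 2, u 0 * v 1 - u 1 * v 0]

/-!
Along the motion `ġ e₃ = g A e₃`, where `A e₃ = (v/ρ) e₂ × e₃ + (v/ℓ) tan φ e₃ × e₃ = (v/ρ) e₁`,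
so the flat output `y = ρ g e₃` has velocity `ẏ = v g e₁`. A rotation commutes with the cross product, hence
`y × ẏ = ρ v (g e₃ × g e₁) = ρ v g (e₃ × e₁) = ρ v g e₂`.
-/

lemma crossVec_eq_crossProduct (u w : Fin 3 → ℝ) : crossVec u w = u ⨯₃ w := rfl

lemma skewMat_mulVec (n w : Fin 3 → ℝ) : skewMat n *ᵥ w = n ⨯₃ w := by
  ext i
  fin_cases i <;> simp [skewMat, cross_apply, mulVec, dotProduct, Fin.sum_univ_three] <;> ring

lemma HasDerivAt.matrix_mulVec {m n : Type*} [Fintype n] {g : ℝ → Matrix m n ℝ}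
    {g' : Matrix m n ℝ} {t : ℝ} (h : ∀ i j, HasDerivAt (fun t => g t i j) (g' i j) t)
    (w : n → ℝ) : HasDerivAt (fun t => g t *ᵥ w) (g' *ᵥ w) t :=
  hasDerivAt_pi.2 fun i => by
    simpa only [mulVec, dotProduct] using HasDerivAt.fun_sum fun j _ => (h i j).mul_const (w j)

theorem Matrix.mulVec_cross_mulVec {R : Type*} [CommRing R] (M : Matrix (Fin 3) (Fin 3) R)
    (a b : Fin 3 → R) : (M *ᵥ a) ⨯₃ (M *ᵥ b) = M.adjugateᵀ *ᵥ (a ⨯₃ b) := by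
  rw [adjugate_fin_three]
  ext i
  fin_cases i <;> simp [cross_apply, mulVec, dotProduct, Fin.sum_univ_three] <;> ring

theorem Matrix.adjugate_eq_transpose_of_mem_SO {n : Type*} [Fintype n] [DecidableEq n]
    {R : Type*} [CommRing R] {M : Matrix n n R} (horth : Mᵀ * M = 1) (hdet : M.det = 1) :
    M.adjugate = Mᵀ :=
  left_inv_eq_right_inv (by rw [adjugate_mul, hdet, one_smul]) (mul_eq_one_comm.mp horth)

theorem Matrix.mulVec_cross_of_mem_SO {R : Type*} [CommRing R] {M : Matrix (Fin 3) (Fin 3) R}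
    (horth : Mᵀ * M = 1) (hdet : M.det = 1) (a b : Fin 3 → R) :
    M *ᵥ (a ⨯₃ b) = (M *ᵥ a) ⨯₃ (M *ᵥ b) := by
  rw [mulVec_cross_mulVec, adjugate_eq_transpose_of_mem_SO horth hdet, transpose_transpose]

lemma sphericalCar_generator_mulVec_e₃ (a b : ℝ) :
    (a • skewMat ![0, 1, 0] + b • skewMat ![0, 0, 1]) *ᵥ ![0, 0, 1] = a • ![1, 0, 0] := by
  rw [add_mulVec, smul_mulVec, smul_mulVec, skewMat_mulVec, skewMat_mulVec, cross_self,
    smul_zero, add_zero]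
  simp [cross_apply]

theorem spherical_car_flat_output_general
    (ρ ℓ : ℝ) (hρ : 0 < ρ) (v φ : ℝ → ℝ)
    (hvne : ∀ t, v t ≠ 0)
    (g : ℝ → Matrix (Fin 3) (Fin 3) ℝ)
    (hSO : ∀ t, (g t)ᵀ * g t = 1 ∧ (g t).det = 1)
    (hode : ∀ t i j, HasDerivAt (fun t => g t i j)
      ((g t * ((v t / ρ) • skewMat ![0, 1, 0] +
        (v t / ℓ * Real.tan (φ t)) • skewMat ![0, 0, 1])) i j) t) :
    ∀ t,
      (g t).mulVec ![1, 0, 0] =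
        (v t)⁻¹ • deriv (fun t => ρ • (g t).mulVec ![0, 0, 1]) t ∧
      (g t).mulVec ![0, 1, 0] =
        (ρ * v t)⁻¹ • crossVec (ρ • (g t).mulVec ![0, 0, 1])
          (deriv (fun t => ρ • (g t).mulVec ![0, 0, 1]) t) ∧
      (g t).mulVec ![0, 0, 1] = ρ⁻¹ • (ρ • (g t).mulVec ![0, 0, 1]) := by
  intro t
  obtain ⟨horth, hdet⟩ := hSO t
  have hy_deriv :
      deriv (fun t => ρ • (g t).mulVec ![0, 0, 1]) t = v t • (g t).mulVec ![1, 0, 0] := by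
    refine ((HasDerivAt.matrix_mulVec (hode t) _).const_smul ρ).deriv.trans ?_
    rw [← mulVec_mulVec, sphericalCar_generator_mulVec_e₃, mulVec_smul, smul_smul,
      mul_div_cancel₀ _ hρ.ne']
  have he₃e₁ : (![0, 0, 1] ⨯₃ ![1, 0, 0] : Fin 3 → ℝ) = ![0, 1, 0] := by simp [cross_apply]
  refine ⟨?_, ?_, ?_⟩
  · rw [hy_deriv, inv_smul_smul₀ (hvne t)]
  · rw [hy_deriv, crossVec_eq_crossProduct, LinearMap.map_smul₂, map_smul,
      ← mulVec_cross_of_mem_SO horth hdet, he₃e₁, smul_smul, smul_smul, mul_assoc,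
      inv_mul_cancel₀ (mul_ne_zero hρ.ne' (hvne t)), one_smul]
  · rw [inv_smul_smul₀ hρ.ne']

/-- Differential flatness of the kinematic car on the sphere: for the left-invariant
model `ġ = g ((v/ρ) X(e₂) + (v/ℓ tan φ) X(e₃))` with `g(t) ∈ SO(3)` and `v(t) ≠ 0`,
the columns of `g` are recovered from the flat output `y = ρ g e₃` and `v` by
`g e₁ = ẏ/v`, `g e₂ = (y × ẏ)/(ρ v)` and `g e₃ = y/ρ`. -/
theorem spherical_car_flat_output
    (ρ ℓ : ℝ) (hρ : 0 < ρ) (hℓ : 0 < ℓ) (v φ : ℝ → ℝ)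
    (hv : Continuous v) (hφ : Continuous φ) (hvne : ∀ t, v t ≠ 0)
    (g : ℝ → Matrix (Fin 3) (Fin 3) ℝ)
    (hSO : ∀ t, (g t)ᵀ * g t = 1 ∧ (g t).det = 1)
    (hode : ∀ t i j, HasDerivAt (fun t => g t i j)
      ((g t * ((v t / ρ) • skewMat ![0, 1, 0] +
        (v t / ℓ * Real.tan (φ t)) • skewMat ![0, 0, 1])) i j) t) :
    ∀ t,
      (g t).mulVec ![1, 0, 0] =
        (v t)⁻¹ • deriv (fun t => ρ • (g t).mulVec ![0, 0, 1]) t ∧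
      (g t).mulVec ![0, 1, 0] =
        (ρ * v t)⁻¹ • crossVec (ρ • (g t).mulVec ![0, 0, 1])
          (deriv (fun t => ρ • (g t).mulVec ![0, 0, 1]) t) ∧
      (g t).mulVec ![0, 0, 1] = ρ⁻¹ • (ρ • (g t).mulVec ![0, 0, 1]) :=
  spherical_car_flat_output_general ρ ℓ hρ v φ hvne g hSO hode
end

section
/- The invariant feedback law assigns the contouring-error dynamics: let ρ > 0, c_σ > 0, let τ, β, τ_d, β_d : ℝ → ℝ³ and σ : ℝ → ℝ be differentiable, and let u : ℝ → ℝ be continuous, satisfying for all s: cos σ(s) = ⟨β(s), β_d(s)⟩, β'(s) = (u(s)/ρ)·τ(s), β_d'(s) = (1/ρ)·τ_d(s). Suppose at a point s we have sin σ(s) ≠ 0, ⟨τ(s), β_d(s)⟩ ≠ 0, and the feedback u(s) = ( ρ·c_σ·σ(s)·sin σ(s) − ⟨β(s), τ_d(s)⟩ ) / ⟨τ(s), β_d(s)⟩. Then σ'(s) = −c_σ·σ(s). -/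
/-!
Differentiating `cos σ = ⟪β, β_d⟫` along the motion gives
`-sin σ · σ' = (u ⟪τ, β_d⟫ + ⟪β, τ_d⟫) / ρ`; the feedback law makes the right-hand side
`-c_σ σ sin σ`, and `sin σ ≠ 0` can be cancelled.
-/

open Real Filter Topology RealInnerProductSpace

section ContouringError

variable {E : Type*} [NormedAddCommGroup E] [InnerProductSpace ℝ E]

theorem sin_mul_deriv_eq_of_cos_eq_inner {σ : ℝ → ℝ} {β βd : ℝ → E} {β' βd' : E} {s : ℝ}
    (hcos : (fun t => cos (σ t)) =ᶠ[𝓝 s] fun t => ⟪β t, βd t⟫)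
    (hσ : DifferentiableAt ℝ σ s) (hβ : HasDerivAt β β' s) (hβd : HasDerivAt βd βd' s) :
    sin (σ s) * deriv σ s = -(⟪β s, βd'⟫ + ⟪β', βd s⟫) := by
  have hcos' : HasDerivAt (fun t => cos (σ t)) (-sin (σ s) * deriv σ s) s :=
    (hasDerivAt_cos (σ s)).comp s hσ.hasDerivAt
  have hinner : HasDerivAt (fun t => cos (σ t)) (⟪β s, βd'⟫ + ⟪β', βd s⟫) s :=
    (hβ.inner ℝ hβd).congr_of_eventuallyEq hcos
  linarith [hcos'.unique hinner]

theorem sin_mul_deriv_eq_of_kinematics {ρ u : ℝ} {σ : ℝ → ℝ} {τ β τd βd : ℝ → E} {s : ℝ}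
    (hρ : ρ ≠ 0) (hcos : ∀ t, cos (σ t) = ⟪β t, βd t⟫) (hσ : DifferentiableAt ℝ σ s)
    (hβ : HasDerivAt β ((u / ρ) • τ s) s) (hβd : HasDerivAt βd (ρ⁻¹ • τd s) s) :
    ρ * (sin (σ s) * deriv σ s) = -(u * ⟪τ s, βd s⟫ + ⟪β s, τd s⟫) := by
  rw [sin_mul_deriv_eq_of_cos_eq_inner (Eventually.of_forall hcos) hσ hβ hβd,
    real_inner_smul_right, real_inner_smul_left]
  field_simp
  ring

end ContouringError

theorem invariant_feedback_assigns_error_dynamics_general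
    (ρ cσ : ℝ) (hρ : 0 < ρ)
    (τ β τd βd : ℝ → EuclideanSpace ℝ (Fin 3)) (σ : ℝ → ℝ) (u : ℝ → ℝ)
    (hσ : Differentiable ℝ σ)
    (hcos : ∀ s, Real.cos (σ s) = (inner ℝ (β s) (βd s) : ℝ))
    (hβ : ∀ s, HasDerivAt β ((u s / ρ) • τ s) s)
    (hβd : ∀ s, HasDerivAt βd (ρ⁻¹ • τd s) s)
    (s : ℝ)
    (hsin : Real.sin (σ s) ≠ 0)
    (hproj : (inner ℝ (τ s) (βd s) : ℝ) ≠ 0)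
    (hfeedback : u s =
      (ρ * cσ * σ s * Real.sin (σ s) - (inner ℝ (β s) (τd s) : ℝ)) /
        (inner ℝ (τ s) (βd s) : ℝ)) :
    deriv σ s = -cσ * σ s := by
  have hkin := sin_mul_deriv_eq_of_kinematics hρ.ne' hcos (hσ s) (hβ s) (hβd s)
  have hlaw : u s * ⟪τ s, βd s⟫ + ⟪β s, τd s⟫ = -(ρ * (sin (σ s) * (-cσ * σ s))) := by
    rw [hfeedback, div_mul_cancel₀ _ hproj]
    ring
  rwa [hlaw, neg_neg, mul_right_inj' hρ.ne', mul_right_inj' hsin] at hkin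

/-- The invariant feedback law
`u = (ρ c_σ σ sin σ - ⟨β, τ_d⟩)/⟨τ, β_d⟩`
assigns the contouring-error dynamics `σ' = -c_σ σ` at every point where
`sin σ ≠ 0` and `⟨τ, β_d⟩ ≠ 0`. -/
theorem invariant_feedback_assigns_error_dynamics
    (ρ cσ : ℝ) (hρ : 0 < ρ) (hcσ : 0 < cσ)
    (τ β τd βd : ℝ → EuclideanSpace ℝ (Fin 3)) (σ : ℝ → ℝ) (u : ℝ → ℝ)
    (hτ : Differentiable ℝ τ) (hτd : Differentiable ℝ τd)
    (hσ : Differentiable ℝ σ) (hu : Continuous u)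
    (hcos : ∀ s, Real.cos (σ s) = (inner ℝ (β s) (βd s) : ℝ))
    (hβ : ∀ s, HasDerivAt β ((u s / ρ) • τ s) s)
    (hβd : ∀ s, HasDerivAt βd (ρ⁻¹ • τd s) s)
    (s : ℝ)
    (hsin : Real.sin (σ s) ≠ 0)
    (hproj : (inner ℝ (τ s) (βd s) : ℝ) ≠ 0)
    (hfeedback : u s =
      (ρ * cσ * σ s * Real.sin (σ s) - (inner ℝ (β s) (τd s) : ℝ)) /
        (inner ℝ (τ s) (βd s) : ℝ)) :
    deriv σ s = -cσ * σ s :=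
  invariant_feedback_assigns_error_dynamics_general ρ cσ hρ τ β τd βd σ u hσ hcos hβ hβd s hsin
    hproj hfeedback
end

section
/- Local asymptotic stability of the observer error by gain assignment: let ρ > 0 and let l₁₁, l₂₂, l₃₁, l₃₂ be real numbers with l₁₁ < 0, l₂₂ < 0, and l₃₁·ρ + 1 > 0. Then every complex eigenvalue λ of the 3×3 matrix M with rows (l₁₁, 0, −1/ρ), (0, l₂₂, 0), (l₃₁ + 1/ρ, l₃₂, 0) satisfies Re λ < 0 (M is a Hurwitz matrix). -/
/-!
The second coordinate decouples, so the characteristic polynomial of `M` factors as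
`(λ - l₂₂) (λ² - l₁₁ λ + (l₃₁ ρ + 1) / ρ²)`. The linear factor has the root `l₂₂ < 0`, and a
quadratic with positive coefficients has all its roots in the open left half-plane: a real root
of `λ² + bλ + c` is negative since `c > 0`, and non-real roots have real part `-b / 2`.
-/

open Matrix

open Complex in
theorem Complex.re_neg_of_sq_add_mul_add_eq_zero {b c : ℝ} (hb : 0 < b) (hc : 0 < c) {z : ℂ}
    (hz : z ^ 2 + b * z + c = 0) : z.re < 0 := by
  have hre : z.re ^ 2 - z.im ^ 2 + b * z.re + c = 0 := by
    simpa [pow_two] using congrArg re hz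
  have him : z.im * (2 * z.re + b) = 0 := by
    have := congrArg im hz
    simp only [pow_two, add_im, mul_im, ofReal_re, ofReal_im, zero_mul, add_zero, zero_im] at this
    linear_combination this
  rcases mul_eq_zero.1 him with hreal | hhalf
  · nlinarith
  · linarith

theorem Matrix.map_of_fin_three {α β : Type*} (f : α → β) (a b c d e g h i j : α) :
    (!![a, b, c; d, e, g; h, i, j]).map f = !![f a, f b, f c; f d, f e, f g; f h, f i, f j] := by
  ext k l
  fin_cases k <;> fin_cases l <;> rfl

theorem Matrix.det_smul_one_sub_fin_three_eq_mul_quadratic {R : Type*} [CommRing R]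
    (a b c d e z : R) :
    (z • (1 : Matrix (Fin 3) (Fin 3) R) - !![a, 0, b; 0, d, 0; c, e, 0]).det =
      (z - d) * (z ^ 2 - a * z - b * c) := by
  simp only [det_fin_three, sub_apply, smul_apply, one_apply_eq, one_apply_ne, ne_eq,
    Fin.reduceEq, not_false_eq_true, smul_eq_mul, of_apply, cons_val', cons_val_zero,
    cons_val_one, cons_val, cons_val_fin_one, Fin.isValue]
  ring

/-- Local asymptotic stability of the linearized observer error dynamics by gain
assignment: if `l₁₁ < 0`, `l₂₂ < 0` and `l₃₁ ρ + 1 > 0`, then every complex eigenvalue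
of `M = ((l₁₁, 0, -1/ρ), (0, l₂₂, 0), (l₃₁ + 1/ρ, l₃₂, 0))` has negative real part,
i.e. `M` is Hurwitz. -/
theorem observer_error_matrix_hurwitz
    (ρ l₁₁ l₂₂ l₃₁ l₃₂ : ℝ) (hρ : 0 < ρ)
    (h11 : l₁₁ < 0) (h22 : l₂₂ < 0) (h31 : l₃₁ * ρ + 1 > 0) :
    ∀ lam : ℂ,
      (lam • (1 : Matrix (Fin 3) (Fin 3) ℂ) -
        (!![l₁₁, 0, -1 / ρ; 0, l₂₂, 0; l₃₁ + 1 / ρ, l₃₂, 0]).map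
          (fun x : ℝ => (x : ℂ))).det = 0 →
      lam.re < 0 := by
  intro lam h
  rw [map_of_fin_three, Complex.ofReal_zero, det_smul_one_sub_fin_three_eq_mul_quadratic] at h
  rcases mul_eq_zero.1 h with hlin | hquad
  · simpa [sub_eq_zero.1 hlin] using h22
  · have hc : 0 < -(-1 / ρ * (l₃₁ + 1 / ρ)) := by
      rw [show -(-1 / ρ * (l₃₁ + 1 / ρ)) = (l₃₁ * ρ + 1) / ρ ^ 2 by field_simp]
      positivity
    refine Complex.re_neg_of_sq_add_mul_add_eq_zero (neg_pos.2 h11) hc ?_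
    push_cast at hquad ⊢
    linear_combination hquad
end
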